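/- arXiv:2201.06353 — 8 statements merged into one kernel-verified Lean document; each statement's English description precedes it below -/
import Mathlib

section
/- Let ν, τ₁, τ₂ be a positively oriented orthonormal basis of ℝ³ and let L : ℝ³ → ℝ³ be self-adjoint on span{τ₁,τ₂} with L ν = 0 and with eigenvalues κ₁, κ₂ on span{τ₁,τ₂}. Define the 3×3 matrix ξ₁ := τ₁ ⊗ (L τ₂) - τ₂ ⊗ (L τ₁). Then ν · (cof ξ₁) ν = κ₁ κ₂. -/
open Matrix

/-- The cofactor matrix of a 3×3 matrix: the transpose of the adjugate. -/
noncomputable def cof (M : Matrix (Fin 3) (Fin 3) ℝ) : Matrix (Fin 3) (Fin 3) ℝ :=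
  M.adjugateᵀ

/-!
For every 3×3 matrix, `cof M (x × y) = M x × M y`. As `τ₁ × τ₂ = ν`, the quantity is
`ν · (ξ₁ τ₁ × ξ₁ τ₂)`; since `ξ₁` maps `τᵢ` into `span {τ₁, τ₂}`, this is the determinant
`(L τ₁ · τ₁)(L τ₂ · τ₂) - (L τ₂ · τ₁)(L τ₁ · τ₂)` of the form `(v, w) ↦ L v · w` on the pair
`τ₁, τ₂`. Under a change of pair this determinant is multiplied by the square of the
change-of-basis determinant, and that square is `1` between orthonormal pairs spanning one plane;
on the eigenvectors `u₁, u₂` it equals `κ₁ κ₂`.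
-/

section CrossProduct

variable {R : Type*} [CommRing R]

theorem cross_add_smul_add_smul (x y : Fin 3 → R) (a b c d : R) :
    (a • x + b • y) ⨯₃ (c • x + d • y) = (a * d - b * c) • (x ⨯₃ y) := by
  simp only [map_add, map_smul, LinearMap.add_apply, LinearMap.smul_apply, cross_self,
    ← cross_anticomm y x]
  module

theorem adjugate_transpose_mulVec_cross (M : Matrix (Fin 3) (Fin 3) R) (x y : Fin 3 → R) :
    M.adjugateᵀ *ᵥ (x ⨯₃ y) = (M *ᵥ x) ⨯₃ (M *ᵥ y) := by
  ext i
  fin_cases i <;>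
    simp [adjugate_fin_three, cross_apply, mulVec, dotProduct, Fin.sum_univ_three] <;> ring

-- `|τ₁ × τ₂|² = 1` and `(τ₁ × τ₂) · ν = det = 1` force `|τ₁ × τ₂ - ν|² = 0`.
theorem cross_eq_of_det_eq_one [LinearOrder R] [IsStrictOrderedRing R] {τ₁ τ₂ ν : Fin 3 → R}
    (h11 : τ₁ ⬝ᵥ τ₁ = 1) (h22 : τ₂ ⬝ᵥ τ₂ = 1) (hνν : ν ⬝ᵥ ν = 1) (h12 : τ₁ ⬝ᵥ τ₂ = 0)
    (hdet : det ![τ₁, τ₂, ν] = 1) : τ₁ ⨯₃ τ₂ = ν := by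
  have hcc : τ₁ ⨯₃ τ₂ ⬝ᵥ τ₁ ⨯₃ τ₂ = 1 := by
    rw [cross_dot_cross, h11, h22, h12, dotProduct_comm, h12]; ring
  have hcν : τ₁ ⨯₃ τ₂ ⬝ᵥ ν = 1 := by
    rw [dotProduct_comm, triple_product_permutation, triple_product_eq_det, hdet]
  rw [← sub_eq_zero, ← dotProduct_self_eq_zero]
  simp only [sub_dotProduct, dotProduct_sub, hcc, hcν, hνν, dotProduct_comm ν]
  ring

end CrossProduct

section CompressionDet

variable {n R : Type*} [Fintype n] [CommRing R]

def compressionDet (L : Matrix n n R) (x y : n → R) : R :=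
  (L *ᵥ x ⬝ᵥ x) * (L *ᵥ y ⬝ᵥ y) - (L *ᵥ y ⬝ᵥ x) * (L *ᵥ x ⬝ᵥ y)

theorem compressionDet_add_smul_add_smul (L : Matrix n n R) (x y : n → R) (p q r s : R) :
    compressionDet L (p • x + q • y) (r • x + s • y) =
      (p * s - q * r) ^ 2 * compressionDet L x y := by
  simp only [compressionDet, mulVec_add, mulVec_smul, add_dotProduct, dotProduct_add,
    smul_dotProduct, dotProduct_smul, smul_eq_mul]
  ring

theorem compressionDet_one [DecidableEq n] (x y : n → R) :
    compressionDet 1 x y = (x ⬝ᵥ x) * (y ⬝ᵥ y) - (x ⬝ᵥ y) ^ 2 := by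
  simp only [compressionDet, one_mulVec, dotProduct_comm y x]
  ring

theorem compressionDet_of_eigenvectors {L : Matrix n n R} {u₁ u₂ : n → R} {κ₁ κ₂ : R}
    (hu11 : u₁ ⬝ᵥ u₁ = 1) (hu22 : u₂ ⬝ᵥ u₂ = 1) (hu12 : u₁ ⬝ᵥ u₂ = 0)
    (hLu₁ : L *ᵥ u₁ = κ₁ • u₁) (hLu₂ : L *ᵥ u₂ = κ₂ • u₂) :
    compressionDet L u₁ u₂ = κ₁ * κ₂ := by
  simp only [compressionDet, hLu₁, hLu₂, smul_dotProduct, hu11, hu22, hu12,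
    dotProduct_comm u₂ u₁, smul_eq_mul]
  ring

theorem compressionDet_eq_of_mem_span_pair [DecidableEq n] {L : Matrix n n R}
    {τ₁ τ₂ u₁ u₂ : n → R}
    (h11 : τ₁ ⬝ᵥ τ₁ = 1) (h22 : τ₂ ⬝ᵥ τ₂ = 1) (h12 : τ₁ ⬝ᵥ τ₂ = 0)
    (hu₁ : u₁ ∈ Submodule.span R ({τ₁, τ₂} : Set (n → R)))
    (hu₂ : u₂ ∈ Submodule.span R ({τ₁, τ₂} : Set (n → R)))
    (hu11 : u₁ ⬝ᵥ u₁ = 1) (hu22 : u₂ ⬝ᵥ u₂ = 1) (hu12 : u₁ ⬝ᵥ u₂ = 0) :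
    compressionDet L u₁ u₂ = compressionDet L τ₁ τ₂ := by
  obtain ⟨p, q, rfl⟩ := Submodule.mem_span_pair.mp hu₁
  obtain ⟨r, s, rfl⟩ := Submodule.mem_span_pair.mp hu₂
  have hdet : (p * s - q * r) ^ 2 = 1 := by
    have h := compressionDet_add_smul_add_smul 1 τ₁ τ₂ p q r s
    rw [compressionDet_one, compressionDet_one, hu11, hu22, hu12, h11, h22, h12] at h
    linear_combination -h
  rw [compressionDet_add_smul_add_smul, hdet, one_mul]

theorem cross_mulVec_mixed_stratum (L : Matrix (Fin 3) (Fin 3) R) (τ₁ τ₂ : Fin 3 → R) :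
    ((vecMulVec τ₁ (L *ᵥ τ₂) - vecMulVec τ₂ (L *ᵥ τ₁)) *ᵥ τ₁) ⨯₃
        ((vecMulVec τ₁ (L *ᵥ τ₂) - vecMulVec τ₂ (L *ᵥ τ₁)) *ᵥ τ₂) =
      compressionDet L τ₁ τ₂ • (τ₁ ⨯₃ τ₂) := by
  simp only [sub_mulVec, vecMulVec_mulVec, op_smul_eq_smul]
  rw [sub_eq_add_neg, sub_eq_add_neg, ← neg_smul, ← neg_smul, cross_add_smul_add_smul,
    compressionDet]
  congr 1
  ring

end CompressionDet

theorem gauss_curvature_from_cof_xi1_general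
    (L : Matrix (Fin 3) (Fin 3) ℝ) (τ₁ τ₂ ν u₁ u₂ : Fin 3 → ℝ) (κ₁ κ₂ : ℝ)
    (h11 : τ₁ ⬝ᵥ τ₁ = 1) (h22 : τ₂ ⬝ᵥ τ₂ = 1) (hνν : ν ⬝ᵥ ν = 1)
    (h12 : τ₁ ⬝ᵥ τ₂ = 0)
    (hdet : Matrix.det (Matrix.of ![τ₁, τ₂, ν])ᵀ = 1)
    -- self-adjointness of `L` on `span {τ₁, τ₂}` with eigenvalues κ₁, κ₂ :
    -- there is an orthonormal basis of eigenvectors of the restriction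
    (hu₁ : u₁ ∈ Submodule.span ℝ ({τ₁, τ₂} : Set (Fin 3 → ℝ)))
    (hu₂ : u₂ ∈ Submodule.span ℝ ({τ₁, τ₂} : Set (Fin 3 → ℝ)))
    (hu11 : u₁ ⬝ᵥ u₁ = 1) (hu22 : u₂ ⬝ᵥ u₂ = 1) (hu12 : u₁ ⬝ᵥ u₂ = 0)
    (hLu₁ : L.mulVec u₁ = κ₁ • u₁) (hLu₂ : L.mulVec u₂ = κ₂ • u₂) :
    ν ⬝ᵥ (cof (Matrix.vecMulVec τ₁ (L.mulVec τ₂)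
        - Matrix.vecMulVec τ₂ (L.mulVec τ₁))).mulVec ν = κ₁ * κ₂ := by
  rw [det_transpose] at hdet
  have hν : τ₁ ⨯₃ τ₂ = ν := cross_eq_of_det_eq_one h11 h22 hνν h12 hdet
  have hK : compressionDet L τ₁ τ₂ = κ₁ * κ₂ := by
    rw [← compressionDet_eq_of_mem_span_pair h11 h22 h12 hu₁ hu₂ hu11 hu22 hu12,
      compressionDet_of_eigenvectors hu11 hu22 hu12 hLu₁ hLu₂]
  rw [cof, ← hν, adjugate_transpose_mulVec_cross, cross_mulVec_mixed_stratum, dotProduct_smul,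
    hν, hνν, hK, smul_eq_mul, mul_one]

theorem gauss_curvature_from_cof_xi1
    (L : Matrix (Fin 3) (Fin 3) ℝ) (τ₁ τ₂ ν u₁ u₂ : Fin 3 → ℝ) (κ₁ κ₂ : ℝ)
    (hLν : L.mulVec ν = 0)
    (h11 : τ₁ ⬝ᵥ τ₁ = 1) (h22 : τ₂ ⬝ᵥ τ₂ = 1) (hνν : ν ⬝ᵥ ν = 1)
    (h12 : τ₁ ⬝ᵥ τ₂ = 0) (h1ν : τ₁ ⬝ᵥ ν = 0) (h2ν : τ₂ ⬝ᵥ ν = 0)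
    (hdet : Matrix.det (Matrix.of ![τ₁, τ₂, ν])ᵀ = 1)
    -- self-adjointness of `L` on `span {τ₁, τ₂}` with eigenvalues κ₁, κ₂ :
    -- there is an orthonormal basis of eigenvectors of the restriction
    (hu₁ : u₁ ∈ Submodule.span ℝ ({τ₁, τ₂} : Set (Fin 3 → ℝ)))
    (hu₂ : u₂ ∈ Submodule.span ℝ ({τ₁, τ₂} : Set (Fin 3 → ℝ)))
    (hu11 : u₁ ⬝ᵥ u₁ = 1) (hu22 : u₂ ⬝ᵥ u₂ = 1) (hu12 : u₁ ⬝ᵥ u₂ = 0)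
    (hLu₁ : L.mulVec u₁ = κ₁ • u₁) (hLu₂ : L.mulVec u₂ = κ₂ • u₂) :
    ν ⬝ᵥ (cof (Matrix.vecMulVec τ₁ (L.mulVec τ₂)
        - Matrix.vecMulVec τ₂ (L.mulVec τ₁))).mulVec ν = κ₁ * κ₂ :=
  gauss_curvature_from_cof_xi1_general L τ₁ τ₂ ν u₁ u₂ κ₁ κ₂ h11 h22 hνν h12 hdet hu₁ hu₂ hu11 hu22
    hu12 hLu₁ hLu₂
end

section
/- Let ν, τ₁, τ₂ be a positively oriented orthonormal basis of ℝ³ and let L : ℝ³ → ℝ³ satisfy L ν = 0. Define ξ₁ := τ₁ ⊗ (L τ₂) - τ₂ ⊗ (L τ₁) (a 3×3 matrix with entries ξ₁^{ij}). Then tr L = ν₁(ξ₁²³ - ξ₁³²) - ν₂(ξ₁¹³ - ξ₁³¹) + ν₃(ξ₁¹² - ξ₁²¹) = Σ_{i,j,k} ε_{ijk} ξ₁^{ij} ν_k, where ε_{ijk} is the Levi-Civita permutation symbol. -/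
open Matrix

/-- The Levi-Civita permutation symbol on `Fin 3`, as the determinant of the
matrix whose rows are the corresponding standard basis vectors. -/
noncomputable def eps (i j k : Fin 3) : ℝ :=
  Matrix.det (Matrix.of ![(Pi.single i 1 : Fin 3 → ℝ), Pi.single j 1, Pi.single k 1])

/-- Expansion of `eps` along the first row. -/
lemma eps_val (i j k : Fin 3) : eps i j k =
    (Pi.single i 1 : Fin 3 → ℝ) 0 * ((Pi.single j 1 : Fin 3 → ℝ) 1 * (Pi.single k 1 : Fin 3 → ℝ) 2)
  - (Pi.single i 1 : Fin 3 → ℝ) 0 * ((Pi.single j 1 : Fin 3 → ℝ) 2 * (Pi.single k 1 : Fin 3 → ℝ) 1)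
  - (Pi.single i 1 : Fin 3 → ℝ) 1 * ((Pi.single j 1 : Fin 3 → ℝ) 0 * (Pi.single k 1 : Fin 3 → ℝ) 2)
  + (Pi.single i 1 : Fin 3 → ℝ) 1 * ((Pi.single j 1 : Fin 3 → ℝ) 2 * (Pi.single k 1 : Fin 3 → ℝ) 0)
  + (Pi.single i 1 : Fin 3 → ℝ) 2 * ((Pi.single j 1 : Fin 3 → ℝ) 0 * (Pi.single k 1 : Fin 3 → ℝ) 1)
  - (Pi.single i 1 : Fin 3 → ℝ) 2 * ((Pi.single j 1 : Fin 3 → ℝ) 1 * (Pi.single k 1 : Fin 3 → ℝ) 0) := by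
  simp [eps, Matrix.det_fin_three, Matrix.vecHead, Matrix.vecTail, Function.comp]
  ring

theorem trace_from_xi1
    (L : Matrix (Fin 3) (Fin 3) ℝ) (τ₁ τ₂ ν : Fin 3 → ℝ)
    (hLν : L.mulVec ν = 0)
    (h11 : τ₁ ⬝ᵥ τ₁ = 1) (h22 : τ₂ ⬝ᵥ τ₂ = 1) (hνν : ν ⬝ᵥ ν = 1)
    (h12 : τ₁ ⬝ᵥ τ₂ = 0) (h1ν : τ₁ ⬝ᵥ ν = 0) (h2ν : τ₂ ⬝ᵥ ν = 0)
    (hdet : Matrix.det (Matrix.of ![τ₁, τ₂, ν])ᵀ = 1) :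
    Matrix.trace L =
        ν 0 * ((Matrix.vecMulVec τ₁ (L.mulVec τ₂) - Matrix.vecMulVec τ₂ (L.mulVec τ₁)) 1 2
              - (Matrix.vecMulVec τ₁ (L.mulVec τ₂) - Matrix.vecMulVec τ₂ (L.mulVec τ₁)) 2 1)
      - ν 1 * ((Matrix.vecMulVec τ₁ (L.mulVec τ₂) - Matrix.vecMulVec τ₂ (L.mulVec τ₁)) 0 2
              - (Matrix.vecMulVec τ₁ (L.mulVec τ₂) - Matrix.vecMulVec τ₂ (L.mulVec τ₁)) 2 0)
      + ν 2 * ((Matrix.vecMulVec τ₁ (L.mulVec τ₂) - Matrix.vecMulVec τ₂ (L.mulVec τ₁)) 0 1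
              - (Matrix.vecMulVec τ₁ (L.mulVec τ₂) - Matrix.vecMulVec τ₂ (L.mulVec τ₁)) 1 0)
    ∧ Matrix.trace L =
        ∑ i, ∑ j, ∑ k, eps i j k
          * (Matrix.vecMulVec τ₁ (L.mulVec τ₂) - Matrix.vecMulVec τ₂ (L.mulVec τ₁)) i j
          * ν k := by
  have hL : ∀ i, L i 0 * ν 0 + L i 1 * ν 1 + L i 2 * ν 2 = 0 := by
    intro i
    have := congrFun hLν i
    simpa [Matrix.mulVec, dotProduct, Fin.sum_univ_three] using this
  have hdet' : τ₁ 0 * (τ₂ 1 * ν 2) - τ₁ 0 * (τ₂ 2 * ν 1) - τ₁ 1 * (τ₂ 0 * ν 2)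
      + τ₁ 1 * (τ₂ 2 * ν 0) + τ₁ 2 * (τ₂ 0 * ν 1) - τ₁ 2 * (τ₂ 1 * ν 0) = 1 := by
    have := hdet
    simp [Matrix.det_fin_three, Matrix.vecHead, Matrix.vecTail, Function.comp] at this
    linarith [this]
  have hP : (Matrix.of ![τ₁, τ₂, ν]) * (Matrix.of ![τ₁, τ₂, ν])ᵀ = 1 := by
    ext i j
    simp only [dotProduct, Fin.sum_univ_three] at h11 h22 hνν h12 h1ν h2ν
    fin_cases i <;> fin_cases j <;>
      simp [Matrix.mul_apply, Fin.sum_univ_three, Matrix.one_apply, Matrix.vecHead,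
        Matrix.vecTail, Function.comp] <;> linarith
  have hQ : (Matrix.of ![τ₁, τ₂, ν])ᵀ * (Matrix.of ![τ₁, τ₂, ν]) = 1 :=
    mul_eq_one_comm.mp hP
  have e : ∀ i j : Fin 3, τ₁ i * τ₁ j + τ₂ i * τ₂ j + ν i * ν j
      = (1 : Matrix (Fin 3) (Fin 3) ℝ) i j := by
    intro i j
    have := congrFun (congrFun hQ i) j
    simp [Matrix.mul_apply, Fin.sum_univ_three, Matrix.vecHead, Matrix.vecTail,
      Function.comp] at this
    linear_combination this
  have e00 : τ₁ 0 * τ₁ 0 + τ₂ 0 * τ₂ 0 + ν 0 * ν 0 = 1 := by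
    have := e 0 0; simpa [Matrix.one_apply] using this
  have e01 : τ₁ 0 * τ₁ 1 + τ₂ 0 * τ₂ 1 + ν 0 * ν 1 = 0 := by
    have := e 0 1; simpa [Matrix.one_apply] using this
  have e02 : τ₁ 0 * τ₁ 2 + τ₂ 0 * τ₂ 2 + ν 0 * ν 2 = 0 := by
    have := e 0 2; simpa [Matrix.one_apply] using this
  have e10 : τ₁ 1 * τ₁ 0 + τ₂ 1 * τ₂ 0 + ν 1 * ν 0 = 0 := by
    have := e 1 0; simpa [Matrix.one_apply] using this
  have e11 : τ₁ 1 * τ₁ 1 + τ₂ 1 * τ₂ 1 + ν 1 * ν 1 = 1 := by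
    have := e 1 1; simpa [Matrix.one_apply] using this
  have e12 : τ₁ 1 * τ₁ 2 + τ₂ 1 * τ₂ 2 + ν 1 * ν 2 = 0 := by
    have := e 1 2; simpa [Matrix.one_apply] using this
  have e20 : τ₁ 2 * τ₁ 0 + τ₂ 2 * τ₂ 0 + ν 2 * ν 0 = 0 := by
    have := e 2 0; simpa [Matrix.one_apply] using this
  have e21 : τ₁ 2 * τ₁ 1 + τ₂ 2 * τ₂ 1 + ν 2 * ν 1 = 0 := by
    have := e 2 1; simpa [Matrix.one_apply] using this
  have e22 : τ₁ 2 * τ₁ 2 + τ₂ 2 * τ₂ 2 + ν 2 * ν 2 = 1 := by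
    have := e 2 2; simpa [Matrix.one_apply] using this
  -- cross product relations : ν = τ₁ × τ₂
  have hc0 : ν 0 = τ₁ 1 * τ₂ 2 - τ₁ 2 * τ₂ 1 := by
    linear_combination (τ₁ 1 * τ₂ 2 - τ₁ 2 * τ₂ 1) * e00
      + (τ₁ 2 * τ₂ 0 - τ₁ 0 * τ₂ 2) * e01
      + (τ₁ 0 * τ₂ 1 - τ₁ 1 * τ₂ 0) * e02 - ν 0 * hdet'
  have hc1 : ν 1 = τ₁ 2 * τ₂ 0 - τ₁ 0 * τ₂ 2 := by
    linear_combination (τ₁ 1 * τ₂ 2 - τ₁ 2 * τ₂ 1) * e10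
      + (τ₁ 2 * τ₂ 0 - τ₁ 0 * τ₂ 2) * e11
      + (τ₁ 0 * τ₂ 1 - τ₁ 1 * τ₂ 0) * e12 - ν 1 * hdet'
  have hc2 : ν 2 = τ₁ 0 * τ₂ 1 - τ₁ 1 * τ₂ 0 := by
    linear_combination (τ₁ 1 * τ₂ 2 - τ₁ 2 * τ₂ 1) * e20
      + (τ₁ 2 * τ₂ 0 - τ₁ 0 * τ₂ 2) * e21
      + (τ₁ 0 * τ₂ 1 - τ₁ 1 * τ₂ 0) * e22 - ν 2 * hdet'
  -- trace identity : tr L = τ₁·Lτ₁ + τ₂·Lτ₂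
  have htr : L 0 0 + L 1 1 + L 2 2 =
      (τ₁ 0 * (L 0 0 * τ₁ 0 + L 0 1 * τ₁ 1 + L 0 2 * τ₁ 2)
        + τ₁ 1 * (L 1 0 * τ₁ 0 + L 1 1 * τ₁ 1 + L 1 2 * τ₁ 2)
        + τ₁ 2 * (L 2 0 * τ₁ 0 + L 2 1 * τ₁ 1 + L 2 2 * τ₁ 2))
      + (τ₂ 0 * (L 0 0 * τ₂ 0 + L 0 1 * τ₂ 1 + L 0 2 * τ₂ 2)
        + τ₂ 1 * (L 1 0 * τ₂ 0 + L 1 1 * τ₂ 1 + L 1 2 * τ₂ 2)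
        + τ₂ 2 * (L 2 0 * τ₂ 0 + L 2 1 * τ₂ 1 + L 2 2 * τ₂ 2)) := by
    linear_combination (-(L 0 0)) * e00 + (-(L 0 1)) * e10 + (-(L 0 2)) * e20
      + (-(L 1 0)) * e01 + (-(L 1 1)) * e11 + (-(L 1 2)) * e21
      + (-(L 2 0)) * e02 + (-(L 2 1)) * e12 + (-(L 2 2)) * e22
      + ν 0 * hL 0 + ν 1 * hL 1 + ν 2 * hL 2
  have h11s : τ₁ 0 * τ₁ 0 + τ₁ 1 * τ₁ 1 + τ₁ 2 * τ₁ 2 = 1 := by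
    simpa [dotProduct, Fin.sum_univ_three] using h11
  have h22s : τ₂ 0 * τ₂ 0 + τ₂ 1 * τ₂ 1 + τ₂ 2 * τ₂ 2 = 1 := by
    simpa [dotProduct, Fin.sum_univ_three] using h22
  have h12s : τ₁ 0 * τ₂ 0 + τ₁ 1 * τ₂ 1 + τ₁ 2 * τ₂ 2 = 0 := by
    simpa [dotProduct, Fin.sum_univ_three] using h12
  have H1 : Matrix.trace L =
        ν 0 * ((Matrix.vecMulVec τ₁ (L.mulVec τ₂) - Matrix.vecMulVec τ₂ (L.mulVec τ₁)) 1 2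
              - (Matrix.vecMulVec τ₁ (L.mulVec τ₂) - Matrix.vecMulVec τ₂ (L.mulVec τ₁)) 2 1)
      - ν 1 * ((Matrix.vecMulVec τ₁ (L.mulVec τ₂) - Matrix.vecMulVec τ₂ (L.mulVec τ₁)) 0 2
              - (Matrix.vecMulVec τ₁ (L.mulVec τ₂) - Matrix.vecMulVec τ₂ (L.mulVec τ₁)) 2 0)
      + ν 2 * ((Matrix.vecMulVec τ₁ (L.mulVec τ₂) - Matrix.vecMulVec τ₂ (L.mulVec τ₁)) 0 1
              - (Matrix.vecMulVec τ₁ (L.mulVec τ₂) - Matrix.vecMulVec τ₂ (L.mulVec τ₁)) 1 0) := by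
    simp only [Matrix.sub_apply, Matrix.vecMulVec_apply, Matrix.mulVec, dotProduct,
      Fin.sum_univ_three, Matrix.trace, Matrix.diag_apply]
    rw [hc0, hc1, hc2]
    linear_combination htr
      - (τ₂ 0 * (L 0 0 * τ₂ 0 + L 0 1 * τ₂ 1 + L 0 2 * τ₂ 2)
        + τ₂ 1 * (L 1 0 * τ₂ 0 + L 1 1 * τ₂ 1 + L 1 2 * τ₂ 2)
        + τ₂ 2 * (L 2 0 * τ₂ 0 + L 2 1 * τ₂ 1 + L 2 2 * τ₂ 2)) * h11s
      - (τ₁ 0 * (L 0 0 * τ₁ 0 + L 0 1 * τ₁ 1 + L 0 2 * τ₁ 2)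
        + τ₁ 1 * (L 1 0 * τ₁ 0 + L 1 1 * τ₁ 1 + L 1 2 * τ₁ 2)
        + τ₁ 2 * (L 2 0 * τ₁ 0 + L 2 1 * τ₁ 1 + L 2 2 * τ₁ 2)) * h22s
      + (τ₁ 0 * (L 0 0 * τ₂ 0 + L 0 1 * τ₂ 1 + L 0 2 * τ₂ 2)
        + τ₁ 1 * (L 1 0 * τ₂ 0 + L 1 1 * τ₂ 1 + L 1 2 * τ₂ 2)
        + τ₁ 2 * (L 2 0 * τ₂ 0 + L 2 1 * τ₂ 1 + L 2 2 * τ₂ 2)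
        + τ₂ 0 * (L 0 0 * τ₁ 0 + L 0 1 * τ₁ 1 + L 0 2 * τ₁ 2)
        + τ₂ 1 * (L 1 0 * τ₁ 0 + L 1 1 * τ₁ 1 + L 1 2 * τ₁ 2)
        + τ₂ 2 * (L 2 0 * τ₁ 0 + L 2 1 * τ₁ 1 + L 2 2 * τ₁ 2)) * h12s
  refine ⟨H1, ?_⟩
  rw [H1]
  simp only [Fin.sum_univ_three, eps_val]
  norm_num [Pi.single_apply, Fin.ext_iff]
  ring
end

section
/- Let M be a 3×3 real matrix with det M = 0 and let ν ∈ ℝ³ be a unit vector. If M = τ₁ ⊗ w₂ - τ₂ ⊗ w₁, where {τ₁, τ₂, ν} is an orthonormal basis of ℝ³ and w₁, w₂ ⊥ ν, then ν · (cof M) ν = det(M + ν ⊗ ν). -/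
open Matrix

set_option maxHeartbeats 2000000
theorem nu_cof_nu_eq_det_add_outer
    (τ₁ τ₂ ν w₁ w₂ : Fin 3 → ℝ)
    (h11 : τ₁ ⬝ᵥ τ₁ = 1) (h22 : τ₂ ⬝ᵥ τ₂ = 1) (hνν : ν ⬝ᵥ ν = 1)
    (h12 : τ₁ ⬝ᵥ τ₂ = 0) (h1ν : τ₁ ⬝ᵥ ν = 0) (h2ν : τ₂ ⬝ᵥ ν = 0)
    (hw₁ : w₁ ⬝ᵥ ν = 0) (hw₂ : w₂ ⬝ᵥ ν = 0) :
    ν ⬝ᵥ (cof (Matrix.vecMulVec τ₁ w₂ - Matrix.vecMulVec τ₂ w₁)).mulVec ν =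
      Matrix.det (Matrix.vecMulVec τ₁ w₂ - Matrix.vecMulVec τ₂ w₁
        + Matrix.vecMulVec ν ν) := by
  simp only [cof, Matrix.adjugate_fin_three, Matrix.det_fin_three, Matrix.vecMulVec,
    Matrix.of_apply, Matrix.sub_apply, Matrix.add_apply, Matrix.transpose_apply,
    Matrix.mulVec, dotProduct, Fin.sum_univ_three,
    Matrix.cons_val', Matrix.cons_val_zero, Matrix.cons_val_one, Matrix.head_cons,
    Matrix.cons_val_two, Matrix.tail_cons, Matrix.empty_val', Matrix.cons_val_fin_one,
    Matrix.head_fin_const]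
  ring
end

section
/- Fix y ∈ ℝ³ with |y| = 1. Define the quadratic form g_y on 3×3 real matrices ζ by g_y(ζ) := α_H ⟨Ψ_y, ζ⟩² - α_K y·(cof ζ)y, where ⟨Ψ_y, ζ⟩ := Σ_{i,j,k} ε_{ijk} y_k ζ_{ij} and cof ζ is the cofactor matrix. Then the vector (identifying ζ with u ∈ ℝ⁹ row-wise) v := (0, -y₃, y₂, y₃, 0, -y₁, -y₂, y₁, 0), which corresponds to the antisymmetric matrix with entries ζ_{ij} = -Σ_k ε_{ijk} y_k, satisfies A_y v = (2α_H - α_K/2) v, where A_y is the symmetric matrix representing g_y. -/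
open Matrix

/-- The pairing `⟨Ψ_y, ζ⟩ = Σ_{i,j,k} ε_{ijk} y_k ζ_{ij}`. -/
noncomputable def Psi (y : Fin 3 → ℝ) (ζ : Matrix (Fin 3) (Fin 3) ℝ) : ℝ :=
  ∑ i, ∑ j, ∑ k, eps i j k * y k * ζ i j

/-- Squared Frobenius norm of a 3×3 matrix. -/
noncomputable def frobSq (ζ : Matrix (Fin 3) (Fin 3) ℝ) : ℝ :=
  ∑ i, ∑ j, (ζ i j) ^ 2

/-- Frobenius inner product of 3×3 matrices. -/
noncomputable def frobInner (A B : Matrix (Fin 3) (Fin 3) ℝ) : ℝ :=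
  ∑ i, ∑ j, A i j * B i j

/-- The quadratic form `g_y(ζ) = α_H ⟨Ψ_y,ζ⟩² − α_K y·(cof ζ)y`. -/
noncomputable def gQF (αH αK : ℝ) (y : Fin 3 → ℝ) (ζ : Matrix (Fin 3) (Fin 3) ℝ) : ℝ :=
  αH * (Psi y ζ) ^ 2 - αK * (y ⬝ᵥ (cof ζ).mulVec y)

/-- The symmetric bilinear form obtained by polarizing `g_y`. -/
noncomputable def gBilin (αH αK : ℝ) (y : Fin 3 → ℝ)
    (A B : Matrix (Fin 3) (Fin 3) ℝ) : ℝ :=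
  (gQF αH αK y (A + B) - gQF αH αK y A - gQF αH αK y B) / 2

/-- The antisymmetric matrix with entries `ζ_{ij} = -Σ_k ε_{ijk} y_k`. -/
noncomputable def antisymOf (y : Fin 3 → ℝ) : Matrix (Fin 3) (Fin 3) ℝ :=
  Matrix.of fun i j => -(∑ k, eps i j k * y k)


lemma psi_add (y : Fin 3 → ℝ) (A B : Matrix (Fin 3) (Fin 3) ℝ) :
    Psi y (A + B) = Psi y A + Psi y B := by
  simp [Psi, Matrix.add_apply, mul_add, Finset.sum_add_distrib]

lemma gBilin_eq (αH αK : ℝ) (y : Fin 3 → ℝ) (A B : Matrix (Fin 3) (Fin 3) ℝ) :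
    gBilin αH αK y A B = αH * Psi y A * Psi y B
      - αK / 2 * ((y ⬝ᵥ (cof (A + B)).mulVec y) - (y ⬝ᵥ (cof A).mulVec y)
          - (y ⬝ᵥ (cof B).mulVec y)) := by
  simp only [gBilin, gQF, psi_add]
  ring

lemma psiW (y : Fin 3 → ℝ) (hy : y ⬝ᵥ y = 1) : Psi y (antisymOf y) = -2 := by
  simp only [dotProduct, Fin.sum_univ_three] at hy
  simp only [Psi, antisymOf, eps, Matrix.det_fin_three, Matrix.of_apply,
    Matrix.cons_val_zero, Matrix.cons_val_one, Matrix.head_cons, Matrix.cons_val_two,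
    Matrix.tail_cons, Pi.single_apply, Fin.sum_univ_three]
  norm_num [Fin.ext_iff]
  linear_combination (-2 : ℝ) * hy

lemma psi_eq (y : Fin 3 → ℝ) (ζ : Matrix (Fin 3) (Fin 3) ℝ) :
    Psi y ζ = - frobInner (antisymOf y) ζ := by
  simp only [Psi, antisymOf, frobInner, eps, Matrix.det_fin_three, Matrix.of_apply,
    Matrix.cons_val_zero, Matrix.cons_val_one, Matrix.head_cons, Matrix.cons_val_two,
    Matrix.tail_cons, Pi.single_apply, Fin.sum_univ_three]
  norm_num [Fin.ext_iff]
  ring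

lemma cof_polar (y : Fin 3 → ℝ) (hy : y ⬝ᵥ y = 1) (ζ : Matrix (Fin 3) (Fin 3) ℝ) :
    (y ⬝ᵥ (cof (antisymOf y + ζ)).mulVec y) - (y ⬝ᵥ (cof (antisymOf y)).mulVec y)
      - (y ⬝ᵥ (cof ζ).mulVec y) = frobInner (antisymOf y) ζ := by
  simp only [dotProduct, Fin.sum_univ_three] at hy
  simp only [cof, frobInner, antisymOf, Matrix.adjugate_fin_three, Matrix.transpose_apply,
    Matrix.mulVec, dotProduct, Matrix.add_apply, Matrix.of_apply,
    Matrix.cons_val', Matrix.cons_val_zero, Matrix.cons_val_one, Matrix.head_cons,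
    Matrix.empty_val', Matrix.cons_val_fin_one, Matrix.head_fin_const,
    Matrix.cons_val_two, Matrix.tail_cons, Fin.sum_univ_three, eps,
    Matrix.det_fin_three, Pi.single_apply]
  norm_num [Fin.ext_iff]
  linear_combination (-(y 2) * ζ 0 1 + y 1 * ζ 0 2 + y 2 * ζ 1 0
    - y 0 * ζ 1 2 - y 1 * ζ 2 0 + y 0 * ζ 2 1) * hy

theorem antisym_is_eigenvector
    (αH αK : ℝ) (y : Fin 3 → ℝ) (hy : y ⬝ᵥ y = 1) :
    ∀ ζ : Matrix (Fin 3) (Fin 3) ℝ,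
      gBilin αH αK y (antisymOf y) ζ =
        (2 * αH - αK / 2) * frobInner (antisymOf y) ζ := by
  intro ζ
  rw [gBilin_eq, cof_polar y hy ζ, psiW y hy, psi_eq y ζ]
  ring
end

section
/- Fix y ∈ ℝ³ with |y| = 1 and constants α_H, α_K with 4α_H > α_K > 0. Let 𝒳_y be the space of 3×3 real matrices ζ satisfying Σ_k ζ_{ki} y_k = 0 and Σ_k ζ_{ik} y_k = 0 for all i, and tr ζ = 0. Define g_y(ζ) := α_H ⟨Ψ_y, ζ⟩² - α_K y·(cof ζ)y where ⟨Ψ_y, ζ⟩ := Σ_{i,j,k} ε_{ijk} y_k ζ_{ij}. Then for every ζ ∈ 𝒳_y, g_y(ζ) ≥ (1/2)·min{α_K, 4α_H - α_K}·|ζ|², where |ζ| is the Frobenius norm. -/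
open Matrix

lemma final_scalar (αH αK A B : ℝ) (hαK : 0 < αK) (hαH : αK < 4 * αH)
    (h1 : 0 ≤ B - 1/2 * A ^ 2) (h2 : 0 ≤ B) :
    1 / 2 * min αK (4 * αH - αK) * B ≤ αH * A ^ 2 - αK * (1/2 * A ^ 2 - 1/2 * B) := by
  rcases le_total αK (4 * αH - αK) with h | h
  · rw [min_eq_left h]; nlinarith [sq_nonneg A]
  · rw [min_eq_right h]; nlinarith [sq_nonneg A]

theorem coercivity_on_Xy
    (αH αK : ℝ) (hαK : 0 < αK) (hαH : αK < 4 * αH)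
    (y : Fin 3 → ℝ) (hy : y ⬝ᵥ y = 1) :
    ∀ ζ : Matrix (Fin 3) (Fin 3) ℝ,
      ζ.mulVec y = 0 → ζᵀ.mulVec y = 0 → Matrix.trace ζ = 0 →
      gQF αH αK y ζ ≥ (1 / 2) * min αK (4 * αH - αK) * frobSq ζ := by
  intro ζ hrow hcol htr
  have hr0 := congrFun hrow 0
  have hr1 := congrFun hrow 1
  have hr2 := congrFun hrow 2
  have hc0 := congrFun hcol 0
  have hc1 := congrFun hcol 1
  have hc2 := congrFun hcol 2
  simp only [Matrix.mulVec, dotProduct, Fin.sum_univ_three, Matrix.transpose_apply,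
    Pi.zero_apply] at hr0 hr1 hr2 hc0 hc1 hc2
  have hT : ζ 0 0 + ζ 1 1 + ζ 2 2 = 0 := by
    simpa [Matrix.trace, Matrix.diag, Fin.sum_univ_three] using htr
  have hN : y 0 * y 0 + y 1 * y 1 + y 2 * y 2 = 1 := by
    simpa [dotProduct, Fin.sum_univ_three] using hy
  have hPsi : Psi y ζ =
      y 0 * ζ 1 2 - y 0 * ζ 2 1 + y 1 * ζ 2 0 - y 1 * ζ 0 2 + y 2 * ζ 0 1 - y 2 * ζ 1 0 := by
    simp only [Psi, Fin.sum_univ_three, eps, Matrix.det_fin_three, Matrix.of_apply,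
      Matrix.cons_val_zero, Matrix.cons_val_one, Matrix.head_cons, Matrix.cons_val_two,
      Matrix.tail_cons]
    simp only [Pi.single_apply]
    norm_num [Fin.ext_iff]
    ring
  have hFexp : frobSq ζ =
      ζ 0 0 ^ 2 + ζ 0 1 ^ 2 + ζ 0 2 ^ 2 + ζ 1 0 ^ 2 + ζ 1 1 ^ 2 + ζ 1 2 ^ 2 +
        ζ 2 0 ^ 2 + ζ 2 1 ^ 2 + ζ 2 2 ^ 2 := by
    simp [frobSq, Fin.sum_univ_three]; ring
  have hcof : y ⬝ᵥ (cof ζ).mulVec y = 1/2 * (Psi y ζ) ^ 2 - 1/2 * frobSq ζ := by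
    rw [hPsi, hFexp]
    simp only [cof, Matrix.adjugate_fin_three, Matrix.mulVec, dotProduct,
      Fin.sum_univ_three, Matrix.transpose_apply, Matrix.cons_val', Matrix.cons_val_zero,
      Matrix.cons_val_one, Matrix.head_cons, Matrix.empty_val', Matrix.cons_val_fin_one,
      Matrix.head_fin_const, Matrix.of_apply, Matrix.cons_val_two, Matrix.tail_cons]
    linear_combination
      (-1/2) * ζ 0 0 * y 0 * hr0 +
      (1/2) * ζ 0 1 * y 1 * hr0 +
      (1/2) * ζ 0 2 * y 2 * hr0 +
      (-1/1) * ζ 1 1 * y 0 * hr0 +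
      (-1/2) * ζ 2 2 * y 0 * hr0 +
      (-1/1) * ζ 0 0 * y 1 * hr1 +
      (1/2) * ζ 1 0 * y 0 * hr1 +
      (-1/2) * ζ 1 1 * y 1 * hr1 +
      (1/2) * ζ 1 2 * y 2 * hr1 +
      (-1/2) * ζ 2 2 * y 1 * hr1 +
      (-1/1) * ζ 0 0 * y 2 * hr2 +
      (-1/1) * ζ 1 1 * y 2 * hr2 +
      (1/2) * ζ 2 0 * y 0 * hr2 +
      (1/2) * ζ 2 1 * y 1 * hr2 +
      (1/2) * ζ 0 0 * y 0 * hc0 +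
      (1/2) * ζ 1 0 * y 1 * hc0 +
      (1/2) * ζ 2 0 * y 2 * hc0 +
      (-1/2) * ζ 2 2 * y 0 * hc0 +
      (1/2) * ζ 0 1 * y 0 * hc1 +
      (1/2) * ζ 1 1 * y 1 * hc1 +
      (1/2) * ζ 2 1 * y 2 * hc1 +
      (-1/2) * ζ 2 2 * y 1 * hc1 +
      (1/2) * ζ 0 2 * y 0 * hc2 +
      (1/2) * ζ 1 2 * y 1 * hc2 +
      (-1/2) * ζ 0 0 * hT +
      (-1/2) * ζ 1 1 * hT +
      (1/2) * ζ 2 2 * hT +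
      (1/1) * ζ 0 0 * y 0 * y 0 * hT +
      (1/1) * ζ 0 0 * y 1 * y 1 * hT +
      (1/1) * ζ 0 0 * y 2 * y 2 * hT +
      (1/1) * ζ 1 1 * y 0 * y 0 * hT +
      (1/1) * ζ 1 1 * y 1 * y 1 * hT +
      (1/1) * ζ 1 1 * y 2 * y 2 * hT +
      (-1/1) * ζ 0 0 * ζ 0 0 * hN +
      (-1/1) * ζ 0 0 * ζ 1 1 * hN +
      (-1/2) * ζ 0 1 * ζ 0 1 * hN +
      (-1/2) * ζ 0 2 * ζ 0 2 * hN +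
      (-1/2) * ζ 1 0 * ζ 1 0 * hN +
      (-1/1) * ζ 1 1 * ζ 1 1 * hN +
      (-1/2) * ζ 1 2 * ζ 1 2 * hN +
      (-1/2) * ζ 2 0 * ζ 2 0 * hN +
      (-1/2) * ζ 2 1 * ζ 2 1 * hN
  have hP2 : frobSq ζ - 1/2 * (Psi y ζ) ^ 2 =
      ζ 0 0 ^ 2 + ζ 1 1 ^ 2 + ζ 2 2 ^ 2 + 2 * ((ζ 0 1 + ζ 1 0) / 2) ^ 2 +
        2 * ((ζ 0 2 + ζ 2 0) / 2) ^ 2 + 2 * ((ζ 1 2 + ζ 2 1) / 2) ^ 2 := by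
    rw [hPsi, hFexp]
    linear_combination
      (-1/2) * ζ 0 0 * y 0 * hr0 +
      (1/2) * ζ 0 1 * y 1 * hr0 +
      (1/2) * ζ 0 2 * y 2 * hr0 +
      (-1/1) * ζ 1 0 * y 1 * hr0 +
      (-1/1) * ζ 2 0 * y 2 * hr0 +
      (1/2) * ζ 2 2 * y 0 * hr0 +
      (-1/1) * ζ 0 1 * y 0 * hr1 +
      (1/2) * ζ 1 0 * y 0 * hr1 +
      (-1/2) * ζ 1 1 * y 1 * hr1 +
      (1/2) * ζ 1 2 * y 2 * hr1 +
      (-1/1) * ζ 2 1 * y 2 * hr1 +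
      (1/2) * ζ 2 2 * y 1 * hr1 +
      (-1/1) * ζ 0 2 * y 0 * hr2 +
      (-1/1) * ζ 1 2 * y 1 * hr2 +
      (1/2) * ζ 2 0 * y 0 * hr2 +
      (1/2) * ζ 2 1 * y 1 * hr2 +
      (1/2) * ζ 0 0 * y 0 * hc0 +
      (1/2) * ζ 1 0 * y 1 * hc0 +
      (1/2) * ζ 2 0 * y 2 * hc0 +
      (-1/2) * ζ 2 2 * y 0 * hc0 +
      (1/2) * ζ 0 1 * y 0 * hc1 +
      (1/2) * ζ 1 1 * y 1 * hc1 +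
      (1/2) * ζ 2 1 * y 2 * hc1 +
      (-1/2) * ζ 2 2 * y 1 * hc1 +
      (1/2) * ζ 0 2 * y 0 * hc2 +
      (1/2) * ζ 1 2 * y 1 * hc2 +
      (-1/2) * ζ 0 1 * ζ 0 1 * hN +
      (1/1) * ζ 0 1 * ζ 1 0 * hN +
      (-1/2) * ζ 0 2 * ζ 0 2 * hN +
      (1/1) * ζ 0 2 * ζ 2 0 * hN +
      (-1/2) * ζ 1 0 * ζ 1 0 * hN +
      (-1/2) * ζ 1 2 * ζ 1 2 * hN +
      (1/1) * ζ 1 2 * ζ 2 1 * hN +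
      (-1/2) * ζ 2 0 * ζ 2 0 * hN +
      (-1/2) * ζ 2 1 * ζ 2 1 * hN
  have h1 : 0 ≤ frobSq ζ - 1/2 * (Psi y ζ) ^ 2 := by rw [hP2]; positivity
  have h2 : 0 ≤ frobSq ζ := by rw [hFexp]; positivity
  rw [ge_iff_le, gQF, hcof]
  exact final_scalar αH αK (Psi y ζ) (frobSq ζ) hαK hαH h1 h2
end

section
/- Fix y ∈ ℝ³ with |y| = 1 and constants α_H, α_K with 4α_H > α_K > 0, and H₀ ∈ ℝ. Define f_y(ζ) := α_H ⟨Ψ_y, ζ⟩² - 2α_H H₀ ⟨Ψ_y, ζ⟩ + α_H H₀² - α_K y·(cof ζ)y on the space 𝒳_y of trace-free 3×3 matrices whose rows and columns are orthogonal to y, where ⟨Ψ_y, ζ⟩ := Σ_{i,j,k} ε_{ijk} y_k ζ_{ij}. Then there exist constants c₁ > 0 and c₂ ≥ 0, independent of y, such that f_y(ζ) ≥ c₁|ζ|² - c₂ for all ζ ∈ 𝒳_y; one may take c₁ = (1/4)min{α_K, 4α_H - α_K} and c₂ = α_H H₀² (8α_H / min{α_K, 4α_H - α_K} - 1). -/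
open Matrix

/-- The pointwise Canham–Helfrich integrand with spontaneous curvature `H₀`. -/
noncomputable def fCH (αH αK H₀ : ℝ) (y : Fin 3 → ℝ) (ζ : Matrix (Fin 3) (Fin 3) ℝ) : ℝ :=
  αH * (Psi y ζ) ^ 2 - 2 * αH * H₀ * Psi y ζ + αH * H₀ ^ 2 - αK * (y ⬝ᵥ (cof ζ).mulVec y)

set_option maxHeartbeats 1000000 in
theorem uniform_coercivity_of_integrand
    (αH αK H₀ : ℝ) (hαK : 0 < αK) (hαH : αK < 4 * αH) :
    ∃ c₁ > (0 : ℝ), ∃ c₂ ≥ (0 : ℝ),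
      c₁ = (1 / 4) * min αK (4 * αH - αK) ∧
      c₂ = αH * H₀ ^ 2 * (8 * αH / min αK (4 * αH - αK) - 1) ∧
      ∀ (y : Fin 3 → ℝ), y ⬝ᵥ y = 1 →
        ∀ ζ : Matrix (Fin 3) (Fin 3) ℝ,
          ζ.mulVec y = 0 → ζᵀ.mulVec y = 0 → Matrix.trace ζ = 0 →
          fCH αH αK H₀ y ζ ≥ c₁ * frobSq ζ - c₂ := by
  have hμpos : 0 < min αK (4 * αH - αK) := lt_min hαK (by linarith)
  have hμ1 : min αK (4 * αH - αK) ≤ αK := min_le_left _ _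
  have hμ2 : min αK (4 * αH - αK) ≤ 4 * αH - αK := min_le_right _ _
  have hαHpos : 0 < αH := by linarith
  have hc₂eq : αH * H₀ ^ 2 * (8 * αH / min αK (4 * αH - αK) - 1)
      = 8 * αH ^ 2 * H₀ ^ 2 / min αK (4 * αH - αK) - αH * H₀ ^ 2 := by
    field_simp
  have hc₂ : αH * H₀ ^ 2 * (8 * αH / min αK (4 * αH - αK) - 1) ≥ 0 := by
    apply mul_nonneg (by positivity)
    rw [sub_nonneg, le_div_iff₀ hμpos]
    linarith
  refine ⟨(1/4) * min αK (4 * αH - αK), by positivity,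
    αH * H₀ ^ 2 * (8 * αH / min αK (4 * αH - αK) - 1), hc₂, rfl, rfl, ?_⟩
  intro y hy ζ h1 h2 h3
  have e0 := congrFun h1 0
  have e1 := congrFun h1 1
  have e2 := congrFun h1 2
  have f0 := congrFun h2 0
  have f1 := congrFun h2 1
  have f2 := congrFun h2 2
  simp only [Matrix.mulVec, dotProduct, Fin.sum_univ_three, Matrix.transpose_apply,
    Pi.zero_apply] at e0 e1 e2 f0 f1 f2
  simp only [Matrix.trace, Fin.sum_univ_three, Matrix.diag] at h3
  simp only [dotProduct, Fin.sum_univ_three] at hy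
  have hY : y ⬝ᵥ (cof ζ).mulVec y = -(1/2) * (ζ 0 0 ^ 2 + ζ 1 1 ^ 2 + ζ 2 2 ^ 2
      + 2 * ζ 0 1 * ζ 1 0 + 2 * ζ 0 2 * ζ 2 0 + 2 * ζ 1 2 * ζ 2 1) := by
    simp only [cof, Matrix.adjugate_fin_three, Matrix.mulVec, dotProduct,
      Fin.sum_univ_three, Matrix.transpose_apply, Matrix.cons_val', Matrix.cons_val_zero,
      Matrix.cons_val_one, Matrix.head_cons, Matrix.empty_val', Matrix.cons_val_fin_one,
      Matrix.head_fin_const, Matrix.of_apply, Matrix.cons_val_two, Matrix.tail_cons]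
    linear_combination (ζ 0 0 * y 0 + ζ 0 1 * y 1 + ζ 0 2 * y 2) * f0
      + (ζ 1 0 * y 0 + ζ 1 1 * y 1 + ζ 1 2 * y 2) * f1
      + (ζ 2 0 * y 0 + ζ 2 1 * y 1 + ζ 2 2 * y 2) * f2
      + (-(y 0 * (ζ 0 0 * y 0 + ζ 0 1 * y 1 + ζ 0 2 * y 2)
        + y 1 * (ζ 1 0 * y 0 + ζ 1 1 * y 1 + ζ 1 2 * y 2)
        + y 2 * (ζ 2 0 * y 0 + ζ 2 1 * y 1 + ζ 2 2 * y 2))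
        + (ζ 0 0 + ζ 1 1 + ζ 2 2) / 2) * h3
      + (((ζ 0 0 + ζ 1 1 + ζ 2 2)^2 - (ζ 0 0 ^ 2 + ζ 1 1 ^ 2 + ζ 2 2 ^ 2
        + 2 * ζ 0 1 * ζ 1 0 + 2 * ζ 0 2 * ζ 2 0 + 2 * ζ 1 2 * ζ 2 1)) / 2) * hy
  have hPsi : Psi y ζ = y 2 * (ζ 0 1 - ζ 1 0) + y 1 * (ζ 2 0 - ζ 0 2) + y 0 * (ζ 1 2 - ζ 2 1) := by
    simp [Psi, eps, Fin.sum_univ_three, Matrix.det_fin_three, Pi.single]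
    ring
  have hF : frobSq ζ = ζ 0 0 ^ 2 + ζ 0 1 ^ 2 + ζ 0 2 ^ 2 + ζ 1 0 ^ 2 + ζ 1 1 ^ 2 + ζ 1 2 ^ 2
      + ζ 2 0 ^ 2 + ζ 2 1 ^ 2 + ζ 2 2 ^ 2 := by
    simp [frobSq, Fin.sum_univ_three]; ring
  have hPsiSq : (Psi y ζ) ^ 2 = frobSq ζ - (ζ 0 0 ^ 2 + ζ 1 1 ^ 2 + ζ 2 2 ^ 2
      + 2 * ζ 0 1 * ζ 1 0 + 2 * ζ 0 2 * ζ 2 0 + 2 * ζ 1 2 * ζ 2 1) := by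
    rw [hPsi, hF]
    linear_combination
      (-( (ζ 0 1 - ζ 1 0) * y 1 - (ζ 2 0 - ζ 0 2) * y 2)) * e0
      + (( (ζ 0 1 - ζ 1 0) * y 1 - (ζ 2 0 - ζ 0 2) * y 2)) * f0
      + (-( (ζ 1 2 - ζ 2 1) * y 2 - (ζ 0 1 - ζ 1 0) * y 0)) * e1
      + (( (ζ 1 2 - ζ 2 1) * y 2 - (ζ 0 1 - ζ 1 0) * y 0)) * f1
      + (-( (ζ 2 0 - ζ 0 2) * y 0 - (ζ 1 2 - ζ 2 1) * y 1)) * e2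
      + (( (ζ 2 0 - ζ 0 2) * y 0 - (ζ 1 2 - ζ 2 1) * y 1)) * f2
      + ((ζ 1 2 - ζ 2 1)^2 + (ζ 2 0 - ζ 0 2)^2 + (ζ 0 1 - ζ 1 0)^2) * hy
  -- abstract the scalars
  set μ : ℝ := min αK (4 * αH - αK) with hμdef
  set P : ℝ := Psi y ζ with hP
  set F : ℝ := frobSq ζ with hFdef
  set T : ℝ := ζ 0 0 ^ 2 + ζ 1 1 ^ 2 + ζ 2 2 ^ 2
      + 2 * ζ 0 1 * ζ 1 0 + 2 * ζ 0 2 * ζ 2 0 + 2 * ζ 1 2 * ζ 2 1 with hTdef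
  clear_value μ P F T
  have hFT1 : F - T ≥ 0 := by rw [← hPsiSq]; positivity
  have hFT2 : F + T ≥ 0 := by
    have hsum : F + T = 2 * ζ 0 0 ^ 2 + 2 * ζ 1 1 ^ 2 + 2 * ζ 2 2 ^ 2
        + (ζ 0 1 + ζ 1 0) ^ 2 + (ζ 0 2 + ζ 2 0) ^ 2 + (ζ 1 2 + ζ 2 1) ^ 2 := by
      rw [hF, hTdef]; ring
    rw [ge_iff_le, ← sub_nonneg, sub_zero, hsum]
    positivity
  have young : 2 * αH * H₀ * P ≤ μ/8 * P^2 + 8 * αH ^ 2 * H₀ ^ 2 / μ := by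
    have h8 : μ/8 * P^2 + 8 * αH ^ 2 * H₀ ^ 2 / μ - 2 * αH * H₀ * P
        = (μ * P - 8 * αH * H₀)^2 / (8 * μ) := by
      field_simp; ring
    linarith [h8, div_nonneg (sq_nonneg (μ * P - 8 * αH * H₀)) (by linarith : (0:ℝ) ≤ 8 * μ)]
  rw [hPsiSq] at young
  rw [fCH, ← hP, hY, hc₂eq, hPsiSq]
  have h4 : (0:ℝ) ≤ (4 * αH - αK - μ) * (F - T) :=
    mul_nonneg (by linarith) hFT1
  have h5 : (0:ℝ) ≤ (αK - μ) * (F + T) := mul_nonneg (by linarith) hFT2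
  have h6 : (0:ℝ) ≤ αK * (F + T) := mul_nonneg hαK.le hFT2
  linarith [young, h4, h5, h6]
end

section
/- Fix y ∈ ℝ³ with |y| = 1 and constants α_H, α_K with 4α_H > α_K > 0, and H₀ ∈ ℝ. The function F_y : ℝ⁹ → ℝ defined (identifying ℝ⁹ with 3×3 matrices u) by F_y(u) := α_H⟨Ψ_y,u⟩² - α_K y·(cof u)y - 2α_H H₀⟨Ψ_y,u⟩ + α_H H₀² + (α_K/2)|π₀ u|² + α_K|π_{-α_K/2} u|² is convex, where π₀ is the orthogonal projection onto the span of the six matrices {y⊗e_i (as rows), e_i⊗y : i=1,2,3} intersected appropriately with the kernel of the quadratic form, and π_{-α_K/2} is the orthogonal projection onto the line spanned by I - y⊗y. -/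
open Matrix

/-- Frobenius-orthogonal projection onto the (5-dimensional) span of the six matrices
`e_i ⊗ y` and `y ⊗ e_i`, `i = 1,2,3` (the kernel directions of the quadratic form). -/
noncomputable def piZero (y : Fin 3 → ℝ) (ζ : Matrix (Fin 3) (Fin 3) ℝ) :
    Matrix (Fin 3) (Fin 3) ℝ :=
  Matrix.vecMulVec (ζ.mulVec y) y + Matrix.vecMulVec y (ζᵀ.mulVec y)
    - (y ⬝ᵥ ζ.mulVec y) • Matrix.vecMulVec y y

/-- Frobenius-orthogonal projection onto the line spanned by `I - y ⊗ y`
(note `|I - y⊗y|² = 2` for a unit vector `y`). -/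
noncomputable def piNeg (y : Fin 3 → ℝ) (ζ : Matrix (Fin 3) (Fin 3) ℝ) :
    Matrix (Fin 3) (Fin 3) ℝ :=
  ((Matrix.trace ζ - y ⬝ᵥ ζ.mulVec y) / 2) •
    ((1 : Matrix (Fin 3) (Fin 3) ℝ) - Matrix.vecMulVec y y)

lemma Psi_eq (y : Fin 3 → ℝ) (ζ : Matrix (Fin 3) (Fin 3) ℝ) :
    Psi y ζ = y 2 * (ζ 0 1 - ζ 1 0) + y 1 * (ζ 2 0 - ζ 0 2) + y 0 * (ζ 1 2 - ζ 2 1) := by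
  simp [Psi, eps, Fin.sum_univ_three, Matrix.det_fin_three, Pi.single_apply]
  ring

lemma piZero_apply (y : Fin 3 → ℝ) (ζ : Matrix (Fin 3) (Fin 3) ℝ) (i j : Fin 3) :
    piZero y ζ i j = (∑ k, ζ i k * y k) * y j + y i * (∑ k, ζ k j * y k)
      - (∑ i', y i' * ∑ k, ζ i' k * y k) * (y i * y j) := by
  simp [piZero, Matrix.vecMulVec_apply, Matrix.mulVec, dotProduct,
    Matrix.add_apply, Matrix.sub_apply, Matrix.smul_apply, Matrix.transpose_apply, smul_eq_mul]

lemma piNeg_apply (y : Fin 3 → ℝ) (ζ : Matrix (Fin 3) (Fin 3) ℝ) (i j : Fin 3) :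
    piNeg y ζ i j = ((ζ 0 0 + ζ 1 1 + ζ 2 2 - ∑ i', y i' * ∑ k, ζ i' k * y k) / 2) *
      ((if i = j then (1:ℝ) else 0) - y i * y j) := by
  simp [piNeg, Matrix.vecMulVec_apply, Matrix.mulVec, dotProduct, Matrix.trace,
    Matrix.diag, Fin.sum_univ_three, Matrix.sub_apply, Matrix.smul_apply, Matrix.one_apply,
    smul_eq_mul]

lemma cof_quad (y : Fin 3 → ℝ) (ζ : Matrix (Fin 3) (Fin 3) ℝ) :
    y ⬝ᵥ (cof ζ).mulVec y =
      y 0 * (y 0 * (ζ 1 1 * ζ 2 2 - ζ 1 2 * ζ 2 1) + y 1 * (-(ζ 1 0 * ζ 2 2) + ζ 1 2 * ζ 2 0) + y 2 * (ζ 1 0 * ζ 2 1 - ζ 1 1 * ζ 2 0))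
    + y 1 * (y 0 * (-(ζ 0 1 * ζ 2 2) + ζ 0 2 * ζ 2 1) + y 1 * (ζ 0 0 * ζ 2 2 - ζ 0 2 * ζ 2 0) + y 2 * (-(ζ 0 0 * ζ 2 1) + ζ 0 1 * ζ 2 0))
    + y 2 * (y 0 * (ζ 0 1 * ζ 1 2 - ζ 0 2 * ζ 1 1) + y 1 * (-(ζ 0 0 * ζ 1 2) + ζ 0 2 * ζ 1 0) + y 2 * (ζ 0 0 * ζ 1 1 - ζ 0 1 * ζ 1 0)) := by
  simp [cof, Matrix.adjugate_fin_three, Matrix.mulVec, dotProduct, Fin.sum_univ_three]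
  ring

set_option maxHeartbeats 2000000 in
lemma key_identity (y : Fin 3 → ℝ) (ζ : Matrix (Fin 3) (Fin 3) ℝ)
    (hy : y 0 ^ 2 + y 1 ^ 2 + y 2 ^ 2 = 1) :
    frobSq (piZero y ζ) + 2 * frobSq (piNeg y ζ) - 2 * (y ⬝ᵥ (cof ζ).mulVec y)
      = frobSq ζ - (Psi y ζ) ^ 2 := by
  rw [Psi_eq, cof_quad]
  simp only [frobSq, piZero_apply, piNeg_apply, Fin.sum_univ_three]
  norm_num [Fin.ext_iff]
  linear_combination ((-1/2)*ζ 2 2 ^ 2 + ζ 2 1 ^ 2 + ζ 2 0 ^ 2 + ζ 1 2 ^ 2 + (-3)*ζ 1 1*ζ 2 2 + (-1/2)*ζ 1 1 ^ 2 + ζ 1 0 ^ 2 + ζ 0 2 ^ 2 + ζ 0 1 ^ 2 + (-3)*ζ 0 0*ζ 2 2 + (-3)*ζ 0 0*ζ 1 1 + (-1/2)*ζ 0 0 ^ 2 + (7/2)*y 2 ^ 2*ζ 2 2 ^ 2 + y 2 ^ 2*ζ 2 1 ^ 2 + y 2 ^ 2*ζ 2 0 ^ 2 + y 2 ^ 2*ζ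 1 2 ^ 2 + 2*y 2 ^ 2*ζ 1 1*ζ 2 2 + (1/2)*y 2 ^ 2*ζ 1 1 ^ 2 + y 2 ^ 2*ζ 0 2 ^ 2 + 2*y 2 ^ 2*ζ 0 0*ζ 2 2 + y 2 ^ 2*ζ 0 0*ζ 1 1 + (1/2)*y 2 ^ 2*ζ 0 0 ^ 2 + (-9/2)*y 2 ^ 4*ζ 2 2 ^ 2 + (-1)*y 2 ^ 4*ζ 1 1*ζ 2 2 + (-1)*y 2 ^ 4*ζ 0 0*ζ 2 2 + (3/2)*y 2 ^ 6*ζ 2 2 ^ 2 + 3*y 1*y 2*ζ 2 1*ζ 2 2 + 3*y 1*y 2*ζ 1 2*ζ 2 2 + 3*y 1*y 2*ζ 1 1*ζ 2 1 + 3*y 1*y 2*ζ 1 1*ζ 1 2 + 2*y 1*y 2*ζ 1 0*ζ 2 0 + 2*y 1*y 2*ζ 0 1*ζ 0 2 + y 1*y 2*ζ 0 0*ζ 2 1 + y 1*y 2*ζ 0 0*ζ 1 2 + (-8)*y 1*y 2 ^ 3*ζ 2 1*ζ 2 2 + (-8)*y 1*y 2 ^ 3*ζ 1 2*ζ 2 2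 + (-1)*y 1*y 2 ^ 3*ζ 1 1*ζ 2 1 + (-1)*y 1*y 2 ^ 3*ζ 1 1*ζ 1 2 + (-1)*y 1*y 2 ^ 3*ζ 0 0*ζ 2 1 + (-1)*y 1*y 2 ^ 3*ζ 0 0*ζ 1 2 + 3*y 1*y 2 ^ 5*ζ 2 1*ζ 2 2 + 3*y 1*y 2 ^ 5*ζ 1 2*ζ 2 2 + (1/2)*y 1 ^ 2*ζ 2 2 ^ 2 + y 1 ^ 2*ζ 2 1 ^ 2 + y 1 ^ 2*ζ 1 2 ^ 2 + 2*y 1 ^ 2*ζ 1 1*ζ 2 2 + (7/2)*y 1 ^ 2*ζ 1 1 ^ 2 + y 1 ^ 2*ζ 1 0 ^ 2 + y 1 ^ 2*ζ 0 1 ^ 2 + y 1 ^ 2*ζ 0 0*ζ 2 2 + 2*y 1 ^ 2*ζ 0 0*ζ 1 1 + (1/2)*y 1 ^ 2*ζ 0 0 ^ 2 + (-1)*y 1 ^ 2*y 2 ^ 2*ζ 2 2 ^ 2 + (-7/2)*y 1 ^ 2*y 2 ^ 2*ζ 2 1 ^ 2 + (-7)*y 1 ^ 2*y 2 ^ 2*ζ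 1 2*ζ 2 1 + (-7/2)*y 1 ^ 2*y 2 ^ 2*ζ 1 2 ^ 2 + (-9)*y 1 ^ 2*y 2 ^ 2*ζ 1 1*ζ 2 2 + (-1)*y 1 ^ 2*y 2 ^ 2*ζ 1 1 ^ 2 + (-1)*y 1 ^ 2*y 2 ^ 2*ζ 0 0*ζ 2 2 + (-1)*y 1 ^ 2*y 2 ^ 2*ζ 0 0*ζ 1 1 + (3/2)*y 1 ^ 2*y 2 ^ 4*ζ 2 2 ^ 2 + (3/2)*y 1 ^ 2*y 2 ^ 4*ζ 2 1 ^ 2 + 3*y 1 ^ 2*y 2 ^ 4*ζ 1 2*ζ 2 1 + (3/2)*y 1 ^ 2*y 2 ^ 4*ζ 1 2 ^ 2 + 3*y 1 ^ 2*y 2 ^ 4*ζ 1 1*ζ 2 2 + (-1)*y 1 ^ 3*y 2*ζ 2 1*ζ 2 2 + (-1)*y 1 ^ 3*y 2*ζ 1 2*ζ 2 2 + (-8)*y 1 ^ 3*y 2*ζ 1 1*ζ 2 1 + (-8)*y 1 ^ 3*y 2*ζ 1 1*ζ 1 2 + (-1)*y 1 ^ 3*y 2*ζ 0 0*ζ 2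 1 + (-1)*y 1 ^ 3*y 2*ζ 0 0*ζ 1 2 + 3*y 1 ^ 3*y 2 ^ 3*ζ 2 1*ζ 2 2 + 3*y 1 ^ 3*y 2 ^ 3*ζ 1 2*ζ 2 2 + 3*y 1 ^ 3*y 2 ^ 3*ζ 1 1*ζ 2 1 + 3*y 1 ^ 3*y 2 ^ 3*ζ 1 1*ζ 1 2 + (-1)*y 1 ^ 4*ζ 1 1*ζ 2 2 + (-9/2)*y 1 ^ 4*ζ 1 1 ^ 2 + (-1)*y 1 ^ 4*ζ 0 0*ζ 1 1 + (3/2)*y 1 ^ 4*y 2 ^ 2*ζ 2 1 ^ 2 + 3*y 1 ^ 4*y 2 ^ 2*ζ 1 2*ζ 2 1 + (3/2)*y 1 ^ 4*y 2 ^ 2*ζ 1 2 ^ 2 + 3*y 1 ^ 4*y 2 ^ 2*ζ 1 1*ζ 2 2 + (3/2)*y 1 ^ 4*y 2 ^ 2*ζ 1 1 ^ 2 + 3*y 1 ^ 5*y 2*ζ 1 1*ζ 2 1 + 3*y 1 ^ 5*y 2*ζ 1 1*ζ 1 2 + (3/2)*y 1 ^ 6*ζ 1 1 ^ 2 + 3*y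 0*y 2*ζ 2 0*ζ 2 2 + y 0*y 2*ζ 1 1*ζ 2 0 + 2*y 0*y 2*ζ 1 0*ζ 1 2 + 3*y 0*y 2*ζ 0 2*ζ 2 2 + y 0*y 2*ζ 0 2*ζ 1 1 + 2*y 0*y 2*ζ 0 1*ζ 2 1 + 3*y 0*y 2*ζ 0 0*ζ 2 0 + 3*y 0*y 2*ζ 0 0*ζ 0 2 + (-8)*y 0*y 2 ^ 3*ζ 2 0*ζ 2 2 + (-1)*y 0*y 2 ^ 3*ζ 1 1*ζ 2 0 + (-8)*y 0*y 2 ^ 3*ζ 0 2*ζ 2 2 + (-1)*y 0*y 2 ^ 3*ζ 0 2*ζ 1 1 + (-1)*y 0*y 2 ^ 3*ζ 0 0*ζ 2 0 + (-1)*y 0*y 2 ^ 3*ζ 0 0*ζ 0 2 + 3*y 0*y 2 ^ 5*ζ 2 0*ζ 2 2 + 3*y 0*y 2 ^ 5*ζ 0 2*ζ 2 2 + 2*y 0*y 1*ζ 2 0*ζ 2 1 + y 0*y 1*ζ 1 0*ζ 2 2 + 3*y 0*y 1*ζ 1 0*ζ 1 1 + 2*y 0*y 1*ζ 0 2*ζ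 1 2 + y 0*y 1*ζ 0 1*ζ 2 2 + 3*y 0*y 1*ζ 0 1*ζ 1 1 + 3*y 0*y 1*ζ 0 0*ζ 1 0 + 3*y 0*y 1*ζ 0 0*ζ 0 1 + (-7)*y 0*y 1*y 2 ^ 2*ζ 2 0*ζ 2 1 + (-7)*y 0*y 1*y 2 ^ 2*ζ 1 2*ζ 2 0 + (-8)*y 0*y 1*y 2 ^ 2*ζ 1 0*ζ 2 2 + (-1)*y 0*y 1*y 2 ^ 2*ζ 1 0*ζ 1 1 + (-7)*y 0*y 1*y 2 ^ 2*ζ 0 2*ζ 2 1 + (-7)*y 0*y 1*y 2 ^ 2*ζ 0 2*ζ 1 2 + (-8)*y 0*y 1*y 2 ^ 2*ζ 0 1*ζ 2 2 + (-1)*y 0*y 1*y 2 ^ 2*ζ 0 1*ζ 1 1 + (-1)*y 0*y 1*y 2 ^ 2*ζ 0 0*ζ 1 0 + (-1)*y 0*y 1*y 2 ^ 2*ζ 0 0*ζ 0 1 + 3*y 0*y 1*y 2 ^ 4*ζ 2 0*ζ 2 1 + 3*y 0*y 1*y 2 ^ 4*ζ 1 2*ζ 2 0 + 3*y 0*y 1*y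 2 ^ 4*ζ 1 0*ζ 2 2 + 3*y 0*y 1*y 2 ^ 4*ζ 0 2*ζ 2 1 + 3*y 0*y 1*y 2 ^ 4*ζ 0 2*ζ 1 2 + 3*y 0*y 1*y 2 ^ 4*ζ 0 1*ζ 2 2 + (-1)*y 0*y 1 ^ 2*y 2*ζ 2 0*ζ 2 2 + (-8)*y 0*y 1 ^ 2*y 2*ζ 1 1*ζ 2 0 + (-7)*y 0*y 1 ^ 2*y 2*ζ 1 0*ζ 2 1 + (-7)*y 0*y 1 ^ 2*y 2*ζ 1 0*ζ 1 2 + (-1)*y 0*y 1 ^ 2*y 2*ζ 0 2*ζ 2 2 + (-8)*y 0*y 1 ^ 2*y 2*ζ 0 2*ζ 1 1 + (-7)*y 0*y 1 ^ 2*y 2*ζ 0 1*ζ 2 1 + (-7)*y 0*y 1 ^ 2*y 2*ζ 0 1*ζ 1 2 + (-1)*y 0*y 1 ^ 2*y 2*ζ 0 0*ζ 2 0 + (-1)*y 0*y 1 ^ 2*y 2*ζ 0 0*ζ 0 2 + 3*y 0*y 1 ^ 2*y 2 ^ 3*ζ 2 0*ζ 2 2 + 3*y 0*y 1 ^ 2*y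 2 ^ 3*ζ 1 1*ζ 2 0 + 3*y 0*y 1 ^ 2*y 2 ^ 3*ζ 1 0*ζ 2 1 + 3*y 0*y 1 ^ 2*y 2 ^ 3*ζ 1 0*ζ 1 2 + 3*y 0*y 1 ^ 2*y 2 ^ 3*ζ 0 2*ζ 2 2 + 3*y 0*y 1 ^ 2*y 2 ^ 3*ζ 0 2*ζ 1 1 + 3*y 0*y 1 ^ 2*y 2 ^ 3*ζ 0 1*ζ 2 1 + 3*y 0*y 1 ^ 2*y 2 ^ 3*ζ 0 1*ζ 1 2 + (-1)*y 0*y 1 ^ 3*ζ 1 0*ζ 2 2 + (-8)*y 0*y 1 ^ 3*ζ 1 0*ζ 1 1 + (-1)*y 0*y 1 ^ 3*ζ 0 1*ζ 2 2 + (-8)*y 0*y 1 ^ 3*ζ 0 1*ζ 1 1 + (-1)*y 0*y 1 ^ 3*ζ 0 0*ζ 1 0 + (-1)*y 0*y 1 ^ 3*ζ 0 0*ζ 0 1 + 3*y 0*y 1 ^ 3*y 2 ^ 2*ζ 2 0*ζ 2 1 + 3*y 0*y 1 ^ 3*y 2 ^ 2*ζ 1 2*ζ 2 0 + 3*y 0*y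 1 ^ 3*y 2 ^ 2*ζ 1 0*ζ 2 2 + 3*y 0*y 1 ^ 3*y 2 ^ 2*ζ 1 0*ζ 1 1 + 3*y 0*y 1 ^ 3*y 2 ^ 2*ζ 0 2*ζ 2 1 + 3*y 0*y 1 ^ 3*y 2 ^ 2*ζ 0 2*ζ 1 2 + 3*y 0*y 1 ^ 3*y 2 ^ 2*ζ 0 1*ζ 2 2 + 3*y 0*y 1 ^ 3*y 2 ^ 2*ζ 0 1*ζ 1 1 + 3*y 0*y 1 ^ 4*y 2*ζ 1 1*ζ 2 0 + 3*y 0*y 1 ^ 4*y 2*ζ 1 0*ζ 2 1 + 3*y 0*y 1 ^ 4*y 2*ζ 1 0*ζ 1 2 + 3*y 0*y 1 ^ 4*y 2*ζ 0 2*ζ 1 1 + 3*y 0*y 1 ^ 4*y 2*ζ 0 1*ζ 2 1 + 3*y 0*y 1 ^ 4*y 2*ζ 0 1*ζ 1 2 + 3*y 0*y 1 ^ 5*ζ 1 0*ζ 1 1 + 3*y 0*y 1 ^ 5*ζ 0 1*ζ 1 1 + (1/2)*y 0 ^ 2*ζ 2 2 ^ 2 + y 0 ^ 2*ζ 2 0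 ^ 2 + y 0 ^ 2*ζ 1 1*ζ 2 2 + (1/2)*y 0 ^ 2*ζ 1 1 ^ 2 + y 0 ^ 2*ζ 1 0 ^ 2 + y 0 ^ 2*ζ 0 2 ^ 2 + y 0 ^ 2*ζ 0 1 ^ 2 + 2*y 0 ^ 2*ζ 0 0*ζ 2 2 + 2*y 0 ^ 2*ζ 0 0*ζ 1 1 + (7/2)*y 0 ^ 2*ζ 0 0 ^ 2 + (-1)*y 0 ^ 2*y 2 ^ 2*ζ 2 2 ^ 2 + (-7/2)*y 0 ^ 2*y 2 ^ 2*ζ 2 0 ^ 2 + (-1)*y 0 ^ 2*y 2 ^ 2*ζ 1 1*ζ 2 2 + (-7)*y 0 ^ 2*y 2 ^ 2*ζ 0 2*ζ 2 0 + (-7/2)*y 0 ^ 2*y 2 ^ 2*ζ 0 2 ^ 2 + (-9)*y 0 ^ 2*y 2 ^ 2*ζ 0 0*ζ 2 2 + (-1)*y 0 ^ 2*y 2 ^ 2*ζ 0 0*ζ 1 1 + (-1)*y 0 ^ 2*y 2 ^ 2*ζ 0 0 ^ 2 + (3/2)*y 0 ^ 2*y 2 ^ 4*ζ 2 2 ^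 2 + (3/2)*y 0 ^ 2*y 2 ^ 4*ζ 2 0 ^ 2 + 3*y 0 ^ 2*y 2 ^ 4*ζ 0 2*ζ 2 0 + (3/2)*y 0 ^ 2*y 2 ^ 4*ζ 0 2 ^ 2 + 3*y 0 ^ 2*y 2 ^ 4*ζ 0 0*ζ 2 2 + (-1)*y 0 ^ 2*y 1*y 2*ζ 2 1*ζ 2 2 + (-1)*y 0 ^ 2*y 1*y 2*ζ 1 2*ζ 2 2 + (-1)*y 0 ^ 2*y 1*y 2*ζ 1 1*ζ 2 1 + (-1)*y 0 ^ 2*y 1*y 2*ζ 1 1*ζ 1 2 + (-7)*y 0 ^ 2*y 1*y 2*ζ 1 0*ζ 2 0 + (-7)*y 0 ^ 2*y 1*y 2*ζ 0 2*ζ 1 0 + (-7)*y 0 ^ 2*y 1*y 2*ζ 0 1*ζ 2 0 + (-7)*y 0 ^ 2*y 1*y 2*ζ 0 1*ζ 0 2 + (-8)*y 0 ^ 2*y 1*y 2*ζ 0 0*ζ 2 1 + (-8)*y 0 ^ 2*y 1*y 2*ζ 0 0*ζ 1 2 + 3*y 0 ^ 2*y 1*y 2 ^ 3*ζ 2 1*ζ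 2 2 + 3*y 0 ^ 2*y 1*y 2 ^ 3*ζ 1 2*ζ 2 2 + 3*y 0 ^ 2*y 1*y 2 ^ 3*ζ 1 0*ζ 2 0 + 3*y 0 ^ 2*y 1*y 2 ^ 3*ζ 0 2*ζ 1 0 + 3*y 0 ^ 2*y 1*y 2 ^ 3*ζ 0 1*ζ 2 0 + 3*y 0 ^ 2*y 1*y 2 ^ 3*ζ 0 1*ζ 0 2 + 3*y 0 ^ 2*y 1*y 2 ^ 3*ζ 0 0*ζ 2 1 + 3*y 0 ^ 2*y 1*y 2 ^ 3*ζ 0 0*ζ 1 2 + (-1)*y 0 ^ 2*y 1 ^ 2*ζ 1 1*ζ 2 2 + (-1)*y 0 ^ 2*y 1 ^ 2*ζ 1 1 ^ 2 + (-7/2)*y 0 ^ 2*y 1 ^ 2*ζ 1 0 ^ 2 + (-7)*y 0 ^ 2*y 1 ^ 2*ζ 0 1*ζ 1 0 + (-7/2)*y 0 ^ 2*y 1 ^ 2*ζ 0 1 ^ 2 + (-1)*y 0 ^ 2*y 1 ^ 2*ζ 0 0*ζ 2 2 + (-9)*y 0 ^ 2*y 1 ^ 2*ζ 0 0*ζ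 1 1 + (-1)*y 0 ^ 2*y 1 ^ 2*ζ 0 0 ^ 2 + (3/2)*y 0 ^ 2*y 1 ^ 2*y 2 ^ 2*ζ 2 1 ^ 2 + (3/2)*y 0 ^ 2*y 1 ^ 2*y 2 ^ 2*ζ 2 0 ^ 2 + 3*y 0 ^ 2*y 1 ^ 2*y 2 ^ 2*ζ 1 2*ζ 2 1 + (3/2)*y 0 ^ 2*y 1 ^ 2*y 2 ^ 2*ζ 1 2 ^ 2 + 3*y 0 ^ 2*y 1 ^ 2*y 2 ^ 2*ζ 1 1*ζ 2 2 + (3/2)*y 0 ^ 2*y 1 ^ 2*y 2 ^ 2*ζ 1 0 ^ 2 + 3*y 0 ^ 2*y 1 ^ 2*y 2 ^ 2*ζ 0 2*ζ 2 0 + (3/2)*y 0 ^ 2*y 1 ^ 2*y 2 ^ 2*ζ 0 2 ^ 2 + 3*y 0 ^ 2*y 1 ^ 2*y 2 ^ 2*ζ 0 1*ζ 1 0 + (3/2)*y 0 ^ 2*y 1 ^ 2*y 2 ^ 2*ζ 0 1 ^ 2 + 3*y 0 ^ 2*y 1 ^ 2*y 2 ^ 2*ζ 0 0*ζ 2 2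 + 3*y 0 ^ 2*y 1 ^ 2*y 2 ^ 2*ζ 0 0*ζ 1 1 + 3*y 0 ^ 2*y 1 ^ 3*y 2*ζ 1 1*ζ 2 1 + 3*y 0 ^ 2*y 1 ^ 3*y 2*ζ 1 1*ζ 1 2 + 3*y 0 ^ 2*y 1 ^ 3*y 2*ζ 1 0*ζ 2 0 + 3*y 0 ^ 2*y 1 ^ 3*y 2*ζ 0 2*ζ 1 0 + 3*y 0 ^ 2*y 1 ^ 3*y 2*ζ 0 1*ζ 2 0 + 3*y 0 ^ 2*y 1 ^ 3*y 2*ζ 0 1*ζ 0 2 + 3*y 0 ^ 2*y 1 ^ 3*y 2*ζ 0 0*ζ 2 1 + 3*y 0 ^ 2*y 1 ^ 3*y 2*ζ 0 0*ζ 1 2 + (3/2)*y 0 ^ 2*y 1 ^ 4*ζ 1 1 ^ 2 + (3/2)*y 0 ^ 2*y 1 ^ 4*ζ 1 0 ^ 2 + 3*y 0 ^ 2*y 1 ^ 4*ζ 0 1*ζ 1 0 + (3/2)*y 0 ^ 2*y 1 ^ 4*ζ 0 1 ^ 2 + 3*y 0 ^ 2*y 1 ^ 4*ζ 0 0*ζ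 1 1 + (-1)*y 0 ^ 3*y 2*ζ 2 0*ζ 2 2 + (-1)*y 0 ^ 3*y 2*ζ 1 1*ζ 2 0 + (-1)*y 0 ^ 3*y 2*ζ 0 2*ζ 2 2 + (-1)*y 0 ^ 3*y 2*ζ 0 2*ζ 1 1 + (-8)*y 0 ^ 3*y 2*ζ 0 0*ζ 2 0 + (-8)*y 0 ^ 3*y 2*ζ 0 0*ζ 0 2 + 3*y 0 ^ 3*y 2 ^ 3*ζ 2 0*ζ 2 2 + 3*y 0 ^ 3*y 2 ^ 3*ζ 0 2*ζ 2 2 + 3*y 0 ^ 3*y 2 ^ 3*ζ 0 0*ζ 2 0 + 3*y 0 ^ 3*y 2 ^ 3*ζ 0 0*ζ 0 2 + (-1)*y 0 ^ 3*y 1*ζ 1 0*ζ 2 2 + (-1)*y 0 ^ 3*y 1*ζ 1 0*ζ 1 1 + (-1)*y 0 ^ 3*y 1*ζ 0 1*ζ 2 2 + (-1)*y 0 ^ 3*y 1*ζ 0 1*ζ 1 1 + (-8)*y 0 ^ 3*y 1*ζ 0 0*ζ 1 0 + (-8)*y 0 ^ 3*y 1*ζ 0 0*ζ 0 1 + 3*y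 0 ^ 3*y 1*y 2 ^ 2*ζ 2 0*ζ 2 1 + 3*y 0 ^ 3*y 1*y 2 ^ 2*ζ 1 2*ζ 2 0 + 3*y 0 ^ 3*y 1*y 2 ^ 2*ζ 1 0*ζ 2 2 + 3*y 0 ^ 3*y 1*y 2 ^ 2*ζ 0 2*ζ 2 1 + 3*y 0 ^ 3*y 1*y 2 ^ 2*ζ 0 2*ζ 1 2 + 3*y 0 ^ 3*y 1*y 2 ^ 2*ζ 0 1*ζ 2 2 + 3*y 0 ^ 3*y 1*y 2 ^ 2*ζ 0 0*ζ 1 0 + 3*y 0 ^ 3*y 1*y 2 ^ 2*ζ 0 0*ζ 0 1 + 3*y 0 ^ 3*y 1 ^ 2*y 2*ζ 1 1*ζ 2 0 + 3*y 0 ^ 3*y 1 ^ 2*y 2*ζ 1 0*ζ 2 1 + 3*y 0 ^ 3*y 1 ^ 2*y 2*ζ 1 0*ζ 1 2 + 3*y 0 ^ 3*y 1 ^ 2*y 2*ζ 0 2*ζ 1 1 + 3*y 0 ^ 3*y 1 ^ 2*y 2*ζ 0 1*ζ 2 1 + 3*y 0 ^ 3*y 1 ^ 2*y 2*ζ 0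 1*ζ 1 2 + 3*y 0 ^ 3*y 1 ^ 2*y 2*ζ 0 0*ζ 2 0 + 3*y 0 ^ 3*y 1 ^ 2*y 2*ζ 0 0*ζ 0 2 + 3*y 0 ^ 3*y 1 ^ 3*ζ 1 0*ζ 1 1 + 3*y 0 ^ 3*y 1 ^ 3*ζ 0 1*ζ 1 1 + 3*y 0 ^ 3*y 1 ^ 3*ζ 0 0*ζ 1 0 + 3*y 0 ^ 3*y 1 ^ 3*ζ 0 0*ζ 0 1 + (-1)*y 0 ^ 4*ζ 0 0*ζ 2 2 + (-1)*y 0 ^ 4*ζ 0 0*ζ 1 1 + (-9/2)*y 0 ^ 4*ζ 0 0 ^ 2 + (3/2)*y 0 ^ 4*y 2 ^ 2*ζ 2 0 ^ 2 + 3*y 0 ^ 4*y 2 ^ 2*ζ 0 2*ζ 2 0 + (3/2)*y 0 ^ 4*y 2 ^ 2*ζ 0 2 ^ 2 + 3*y 0 ^ 4*y 2 ^ 2*ζ 0 0*ζ 2 2 + (3/2)*y 0 ^ 4*y 2 ^ 2*ζ 0 0 ^ 2 + 3*y 0 ^ 4*y 1*y 2*ζ 1 0*ζ 2 0 + 3*y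 0 ^ 4*y 1*y 2*ζ 0 2*ζ 1 0 + 3*y 0 ^ 4*y 1*y 2*ζ 0 1*ζ 2 0 + 3*y 0 ^ 4*y 1*y 2*ζ 0 1*ζ 0 2 + 3*y 0 ^ 4*y 1*y 2*ζ 0 0*ζ 2 1 + 3*y 0 ^ 4*y 1*y 2*ζ 0 0*ζ 1 2 + (3/2)*y 0 ^ 4*y 1 ^ 2*ζ 1 0 ^ 2 + 3*y 0 ^ 4*y 1 ^ 2*ζ 0 1*ζ 1 0 + (3/2)*y 0 ^ 4*y 1 ^ 2*ζ 0 1 ^ 2 + 3*y 0 ^ 4*y 1 ^ 2*ζ 0 0*ζ 1 1 + (3/2)*y 0 ^ 4*y 1 ^ 2*ζ 0 0 ^ 2 + 3*y 0 ^ 5*y 2*ζ 0 0*ζ 2 0 + 3*y 0 ^ 5*y 2*ζ 0 0*ζ 0 2 + 3*y 0 ^ 5*y 1*ζ 0 0*ζ 1 0 + 3*y 0 ^ 5*y 1*ζ 0 0*ζ 0 1 + (3/2)*y 0 ^ 6*ζ 0 0 ^ 2) * hy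

lemma frobSq_nonneg (ζ : Matrix (Fin 3) (Fin 3) ℝ) : 0 ≤ frobSq ζ :=
  Finset.sum_nonneg fun _ _ => Finset.sum_nonneg fun _ _ => sq_nonneg _

lemma psi_sq_le (y : Fin 3 → ℝ) (ζ : Matrix (Fin 3) (Fin 3) ℝ)
    (hy : y 0 ^ 2 + y 1 ^ 2 + y 2 ^ 2 = 1) :
    (Psi y ζ) ^ 2 ≤ 2 * frobSq ζ := by
  have h : (Psi y ζ) ^ 2
      + ((y 0 * (ζ 2 0 - ζ 0 2) - y 1 * (ζ 1 2 - ζ 2 1)) ^ 2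
        + (y 0 * (ζ 0 1 - ζ 1 0) - y 2 * (ζ 1 2 - ζ 2 1)) ^ 2
        + (y 1 * (ζ 0 1 - ζ 1 0) - y 2 * (ζ 2 0 - ζ 0 2)) ^ 2
        + (ζ 0 1 + ζ 1 0) ^ 2 + (ζ 0 2 + ζ 2 0) ^ 2 + (ζ 1 2 + ζ 2 1) ^ 2
        + 2 * ((ζ 0 0) ^ 2 + (ζ 1 1) ^ 2 + (ζ 2 2) ^ 2))
      = 2 * frobSq ζ := by
    rw [Psi_eq]
    simp only [frobSq, Fin.sum_univ_three]
    linear_combination ((ζ 1 2 - ζ 2 1) ^ 2 + (ζ 2 0 - ζ 0 2) ^ 2 + (ζ 0 1 - ζ 1 0) ^ 2) * hy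
  nlinarith [sq_nonneg (y 0 * (ζ 2 0 - ζ 0 2) - y 1 * (ζ 1 2 - ζ 2 1)),
    sq_nonneg (y 0 * (ζ 0 1 - ζ 1 0) - y 2 * (ζ 1 2 - ζ 2 1)),
    sq_nonneg (y 1 * (ζ 0 1 - ζ 1 0) - y 2 * (ζ 2 0 - ζ 0 2)),
    sq_nonneg (ζ 0 1 + ζ 1 0), sq_nonneg (ζ 0 2 + ζ 2 0), sq_nonneg (ζ 1 2 + ζ 2 1),
    sq_nonneg (ζ 0 0), sq_nonneg (ζ 1 1), sq_nonneg (ζ 2 2)]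

lemma Psi_combo (y : Fin 3 → ℝ) (a b : ℝ) (x z : Matrix (Fin 3) (Fin 3) ℝ) :
    Psi y (a • x + b • z) = a * Psi y x + b * Psi y z := by
  simp only [Psi_eq, Matrix.add_apply, Matrix.smul_apply, smul_eq_mul]
  ring

lemma Psi_sub (y : Fin 3 → ℝ) (x z : Matrix (Fin 3) (Fin 3) ℝ) :
    Psi y (x - z) = Psi y x - Psi y z := by
  simp only [Psi_eq, Matrix.sub_apply]
  ring

lemma frobSq_combo (a : ℝ) (x z : Matrix (Fin 3) (Fin 3) ℝ) :
    frobSq (a • x + (1 - a) • z)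
      = a * frobSq x + (1 - a) * frobSq z - a * (1 - a) * frobSq (x - z) := by
  simp only [frobSq, Matrix.add_apply, Matrix.sub_apply, Matrix.smul_apply, smul_eq_mul,
    Fin.sum_univ_three]
  ring

theorem modified_integrand_is_convex
    (αH αK H₀ : ℝ) (hαK : 0 < αK) (hαH : αK < 4 * αH)
    (y : Fin 3 → ℝ) (hy : y ⬝ᵥ y = 1) :
    ConvexOn ℝ Set.univ (fun ζ : Matrix (Fin 3) (Fin 3) ℝ =>
      αH * (Psi y ζ) ^ 2 - αK * (y ⬝ᵥ (cof ζ).mulVec y)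
        - 2 * αH * H₀ * Psi y ζ + αH * H₀ ^ 2
        + (αK / 2) * frobSq (piZero y ζ) + αK * frobSq (piNeg y ζ)) := by
  have hy' : y 0 ^ 2 + y 1 ^ 2 + y 2 ^ 2 = 1 := by
    simpa [dotProduct, Fin.sum_univ_three, sq] using hy
  have hrep : ∀ ζ : Matrix (Fin 3) (Fin 3) ℝ,
      αH * (Psi y ζ) ^ 2 - αK * (y ⬝ᵥ (cof ζ).mulVec y)
        - 2 * αH * H₀ * Psi y ζ + αH * H₀ ^ 2
        + (αK / 2) * frobSq (piZero y ζ) + αK * frobSq (piNeg y ζ)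
      = (αH - αK / 2) * (Psi y ζ) ^ 2 - 2 * αH * H₀ * Psi y ζ + αH * H₀ ^ 2
        + (αK / 2) * frobSq ζ := fun ζ => by
    linear_combination (αK / 2) * key_identity y ζ hy'
  refine ⟨convex_univ, fun x _ z _ a b ha hb hab => ?_⟩
  simp only [smul_eq_mul]
  rw [hrep, hrep, hrep]
  have hb' : b = 1 - a := by linarith
  subst hb'
  rw [Psi_combo, frobSq_combo]
  have hcs : (Psi y x - Psi y z) ^ 2 ≤ 2 * frobSq (x - z) := by
    rw [← Psi_sub]; exact psi_sq_le y (x - z) hy'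
  have hF : 0 ≤ frobSq (x - z) := frobSq_nonneg _
  have hkey : 0 ≤ (αH - αK / 2) * (Psi y x - Psi y z) ^ 2 + (αK / 2) * frobSq (x - z) := by
    nlinarith [mul_nonneg (by linarith : (0:ℝ) ≤ 4 * αH - αK) (sq_nonneg (Psi y x - Psi y z)),
      mul_nonneg hαK.le (by linarith : (0:ℝ) ≤ 2 * frobSq (x - z) - (Psi y x - Psi y z) ^ 2)]
  nlinarith [mul_nonneg (mul_nonneg ha hb) hkey]
end

section
/- Let M be a compact oriented surface in ℝ³ with principal curvatures κ₁, κ₂, mean curvature H = κ₁ + κ₂ and Gaussian curvature K = κ₁κ₂, and let G = {(p, ν(p)) : p ∈ M} be its Gauss graph, with ξ(p,ν(p)) = dΦ_p(τ₁) ∧ dΦ_p(τ₂) the (unnormalized) tangent 2-vector of G where Φ(p) = (p, ν(p)). Then |ξ(p, ν(p))|² = H(p)² + (1 - K(p))², and consequently ℋ²(G) = ∫_M √(H² + (1-K)²) dℋ². -/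
open Matrix

/-- Dot product on ℝ³ × ℝ³ ≃ ℝ⁶. -/
noncomputable def dot6 (u v : (Fin 3 → ℝ) × (Fin 3 → ℝ)) : ℝ :=
  u.1 ⬝ᵥ v.1 + u.2 ⬝ᵥ v.2

/-- The squared norm of a simple 2-vector `u ∧ v`, given by the Gram determinant. -/
noncomputable def wedgeNormSq (u v : (Fin 3 → ℝ) × (Fin 3 → ℝ)) : ℝ :=
  dot6 u u * dot6 v v - (dot6 u v) ^ 2

/-- For a principal orthonormal frame `τ₁, τ₂` with `dν(τᵢ) = κᵢ τᵢ`, the squared norm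
of the tangent 2-vector `ξ = (τ₁, dν(τ₁)) ∧ (τ₂, dν(τ₂))` of the Gauss graph equals
`H² + (1 - K)²`, where `H = κ₁ + κ₂` and `K = κ₁ κ₂`. -/
theorem gauss_graph_jacobian_sq
    (τ₁ τ₂ : Fin 3 → ℝ) (κ₁ κ₂ : ℝ)
    (h11 : τ₁ ⬝ᵥ τ₁ = 1) (h22 : τ₂ ⬝ᵥ τ₂ = 1) (h12 : τ₁ ⬝ᵥ τ₂ = 0) :
    wedgeNormSq (τ₁, κ₁ • τ₁) (τ₂, κ₂ • τ₂) =
      (κ₁ + κ₂) ^ 2 + (1 - κ₁ * κ₂) ^ 2 := by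
  simp [wedgeNormSq, dot6, dotProduct_smul, smul_dotProduct, h11, h22, h12, smul_eq_mul]
  ring
end
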